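/- arXiv:2507.13024 — 2 statements merged into one kernel-verified Lean document; each statement's English description precedes it below -/
import Mathlib

section
/- For all real numbers t, a, μ and all σ > 0, the integral of the function x ↦ Φ(t + a·x) against the Gaussian density with mean μ and variance σ², i.e. ∫_ℝ Φ(t + a·x) · (1/(σ√(2π))) · exp(−(x − μ)²/(2σ²)) dx, equals Φ((t + a·μ)/√(1 + a²σ²)). -/
/-!
If `Z` is standard normal and independent of `X ~ N(μ, σ²)`, then `Φ(t + a x) = P(Z ≤ t + a x)`,
so the integral is `P(Z - a X ≤ t)`. Since `Z - a X ~ N(-a μ, 1 + a² σ²)` (the law of `Z - a X` is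
the convolution of two Gaussians), this probability is `Φ((t + a μ) / √(1 + a² σ²))`.
-/

open MeasureTheory ProbabilityTheory Real

/-- The standard normal CDF `Φ(t) = (2π)^{-1/2} ∫_{-∞}^t e^{-s²/2} ds`. -/
noncomputable def stdNormalCDF (t : ℝ) : ℝ :=
  ∫ s in Set.Iic t, Real.exp (-s ^ 2 / 2) / Real.sqrt (2 * Real.pi)

open Set
open scoped NNReal

lemma stdNormalCDF_eq_measureReal (t : ℝ) :
    stdNormalCDF t = (gaussianReal 0 1).real (Iic t) := by
  rw [measureReal_def, gaussianReal_apply_eq_integral 0 one_ne_zero, ENNReal.toReal_ofReal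
    (setIntegral_nonneg measurableSet_Iic fun x _ ↦ gaussianPDFReal_nonneg 0 1 x)]
  simp [stdNormalCDF, gaussianPDFReal, div_eq_inv_mul]

lemma gaussianReal_zero_one_map_sqrt_mul_add (m : ℝ) (v : ℝ≥0) :
    (gaussianReal 0 1).map (fun z ↦ √v * z + m) = gaussianReal m v := by
  have hcomp : (fun z ↦ √v * z + m) = (· + m) ∘ (√v * ·) := rfl
  rw [hcomp, ← Measure.map_map (by fun_prop) (by fun_prop), gaussianReal_map_const_mul,
    gaussianReal_map_add_const]
  congr
  · ring
  · ext; simp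

lemma measureReal_gaussianReal_Iic (m : ℝ) {v : ℝ≥0} (hv : v ≠ 0) (t : ℝ) :
    (gaussianReal m v).real (Iic t) = stdNormalCDF ((t - m) / √v) := by
  have hsqrt : 0 < √(v : ℝ) := by positivity
  rw [← gaussianReal_zero_one_map_sqrt_mul_add,
    map_measureReal_apply (by fun_prop) measurableSet_Iic, stdNormalCDF_eq_measureReal]
  congr 1
  ext z
  simp [le_div_iff₀ hsqrt, le_sub_iff_add_le, mul_comm]

lemma integral_measureReal_Iic_add_mul (γ ν : Measure ℝ) [IsFiniteMeasure γ] [IsFiniteMeasure ν]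
    (t a : ℝ) :
    ∫ x, γ.real (Iic (t + a * x)) ∂ν = (γ ∗ ν.map (fun x ↦ -a * x)).real (Iic t) := by
  set S : Set (ℝ × ℝ) := (fun p ↦ p.1 + -a * p.2) ⁻¹' Iic t
  have hS : MeasurableSet S := measurableSet_Iic.preimage (by fun_prop)
  have hslice (x : ℝ) : (fun z ↦ (z, x)) ⁻¹' S = Iic (t + a * x) := by
    ext z; simp [S, ← sub_eq_add_neg]
  have hconv : γ ∗ ν.map (fun x ↦ -a * x) = (γ.prod ν).map (fun p ↦ p.1 + -a * p.2) := by
    rw [Measure.conv, ← Measure.map_id (μ := γ),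
      Measure.map_prod_map _ _ (by fun_prop) (by fun_prop),
      Measure.map_map (by fun_prop) (by fun_prop), Measure.map_id]
    rfl
  rw [hconv, map_measureReal_apply (by fun_prop) measurableSet_Iic, measureReal_def,
    Measure.prod_apply_symm hS, ← integral_toReal (measurable_measure_prodMk_right hS).aemeasurable
      (ae_of_all _ fun _ ↦ measure_lt_top _ _)]
  simp only [hslice, measureReal_def]

lemma integral_stdNormalCDF_add_mul_gaussianReal (t a m : ℝ) (v : ℝ≥0) :
    ∫ x, stdNormalCDF (t + a * x) ∂gaussianReal m v =
      stdNormalCDF ((t + a * m) / √(1 + a ^ 2 * v)) := by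
  simp_rw [stdNormalCDF_eq_measureReal]
  rw [integral_measureReal_Iic_add_mul, gaussianReal_map_const_mul, gaussianReal_conv_gaussianReal,
    measureReal_gaussianReal_Iic _ (by positivity), ← stdNormalCDF_eq_measureReal]
  congr 2
  · ring
  · simp

lemma gaussianPDFReal_sq {σ : ℝ} (hσ : 0 ≤ σ) (μ x : ℝ) :
    gaussianPDFReal μ (NNReal.mk (σ ^ 2) (sq_nonneg σ)) x =
      1 / (σ * √(2 * π)) * exp (-(x - μ) ^ 2 / (2 * σ ^ 2)) := by
  rw [gaussianPDFReal_def, NNReal.coe_mk, mul_comm (2 * π), sqrt_mul (sq_nonneg σ), sqrt_sq hσ,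
    one_div]

/-- Lemma A.1 (probit integral lemma): for all `t a μ : ℝ` and `σ > 0`,
`∫ Φ(t + a x) · (1/(σ√(2π))) exp(−(x−μ)²/(2σ²)) dx = Φ((t + aμ)/√(1 + a²σ²))`. -/
theorem probit_integral (t a μ σ : ℝ) (hσ : 0 < σ) :
    ∫ x : ℝ, stdNormalCDF (t + a * x) *
      (1 / (σ * Real.sqrt (2 * Real.pi)) * Real.exp (-(x - μ) ^ 2 / (2 * σ ^ 2))) =
    stdNormalCDF ((t + a * μ) / Real.sqrt (1 + a ^ 2 * σ ^ 2)) := by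
  have hv : NNReal.mk (σ ^ 2) (sq_nonneg σ) ≠ 0 := NNReal.coe_ne_zero.mp (pow_pos hσ 2).ne'
  simp_rw [← gaussianPDFReal_sq hσ.le, mul_comm (stdNormalCDF _), ← smul_eq_mul,
    ← integral_gaussianReal_eq_integral_smul hv]
  exact integral_stdNormalCDF_add_mul_gaussianReal t a μ _
end

section
/- Let Z be a real random variable distributed as a Gaussian with mean μ and variance σ² (σ² ≥ 0). Then for all real t and a, E[Φ(t + a·Z)] = Φ((t + a·μ)/√(1 + a²σ²)). -/
open MeasureTheory ProbabilityTheory Real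
open scoped NNReal

/-!
Write `Φ(c + b x) = P(Y ≤ c + b x)` for a standard Gaussian `Y` independent of `Z`. Then
`E[Φ(t + a Z)] = P(Y - a Z ≤ t)`, and `Y - a Z` is Gaussian with mean `-a μ` and variance
`1 + a² σ²`, being a convolution of Gaussians; standardising its CDF gives the claim.
-/

open Set

theorem stdNormalCDF_eq_cdf_gaussianReal : stdNormalCDF = cdf (gaussianReal 0 1) := by
  ext t
  rw [cdf_eq_real, measureReal_def, gaussianReal_apply_eq_integral _ one_ne_zero,
    ENNReal.toReal_ofReal (setIntegral_nonneg measurableSet_Iic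
      fun x _ ↦ gaussianPDFReal_nonneg 0 1 x), stdNormalCDF]
  congr 1 with x
  simp [gaussianPDFReal, div_eq_inv_mul]

@[fun_prop]
theorem measurable_stdNormalCDF : Measurable stdNormalCDF :=
  stdNormalCDF_eq_cdf_gaussianReal ▸ (monotone_cdf _).measurable

theorem cdf_conv (ρ ν : Measure ℝ) [IsProbabilityMeasure ρ] [IsProbabilityMeasure ν]
    (t : ℝ) :
    cdf (ρ ∗ ν) t = ∫ x, cdf ρ (t - x) ∂ν := by
  have hρ (x : ℝ) : ρ (Iic (t - x)) = ENNReal.ofReal (cdf ρ (t - x)) :=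
    (ofReal_cdf ρ _).symm
  have hsec (x : ℝ) :
      (fun y ↦ (y, x)) ⁻¹' ((fun p : ℝ × ℝ ↦ p.1 + p.2) ⁻¹' Iic t) = Iic (t - x) := by
    ext y; simp [le_sub_iff_add_le]
  rw [cdf_eq_real, measureReal_def, Measure.conv,
    Measure.map_apply (by fun_prop) measurableSet_Iic,
    Measure.prod_apply_symm (measurableSet_Iic.preimage (by fun_prop))]
  simp_rw [hsec, hρ]
  rw [← ofReal_integral_eq_lintegral_ofReal, ENNReal.toReal_ofReal
    (integral_nonneg fun x ↦ cdf_nonneg ρ _)]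
  · have hmeas : Measurable fun x ↦ cdf ρ (t - x) :=
      (monotone_cdf ρ).measurable.comp (measurable_const.sub measurable_id)
    refine Integrable.of_bound hmeas.aestronglyMeasurable 1 (ae_of_all _ fun x ↦ ?_)
    rw [Real.norm_of_nonneg (cdf_nonneg ρ _)]
    exact cdf_le_one ρ _
  · exact ae_of_all _ fun x ↦ cdf_nonneg ρ _

theorem cdf_gaussianReal (m : ℝ) {v : ℝ≥0} (hv : v ≠ 0) (t : ℝ) :
    cdf (gaussianReal m v) t = cdf (gaussianReal 0 1) ((t - m) / √v) := by
  have hσ : 0 < √(v : ℝ) := Real.sqrt_pos.mpr (by positivity)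
  have hmap : (gaussianReal 0 1).map (fun x ↦ m + √v * x) = gaussianReal m v := by
    rw [show (fun x ↦ m + √v * x) = (m + ·) ∘ (√v * ·) from rfl,
      ← Measure.map_map (by fun_prop) (by fun_prop),
      gaussianReal_map_const_mul,
      gaussianReal_map_const_add]
    congr
    · ring
    · ext; simp [Real.sq_sqrt]
  have hpre : (fun x ↦ m + √v * x) ⁻¹' Iic t = Iic ((t - m) / √v) := by
    ext x
    rw [mem_preimage, mem_Iic, mem_Iic, le_div_iff₀ hσ, le_sub_iff_add_le', mul_comm]
  rw [cdf_eq_real, cdf_eq_real, ← hmap, map_measureReal_apply (by fun_prop) measurableSet_Iic,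
    hpre]

theorem probit_gaussian_expectation_general {Ω : Type*} [MeasurableSpace Ω]
    (P : Measure Ω) [IsProbabilityMeasure P]
    (Z : Ω → ℝ) (μ : ℝ) (v : ℝ≥0)
    (hdist : P.map Z = gaussianReal μ v) (t a : ℝ) :
    ∫ ω, stdNormalCDF (t + a * Z ω) ∂P =
      stdNormalCDF ((t + a * μ) / Real.sqrt (1 + a ^ 2 * (v : ℝ))) := by
  have hZ : HasLaw Z (gaussianReal μ v) P :=
    ⟨.of_map_ne_zero (by simp [hdist, NeZero.ne]), hdist⟩
  calc ∫ ω, stdNormalCDF (t + a * Z ω) ∂P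
      = ∫ x, stdNormalCDF (t + a * x) ∂(gaussianReal μ v) :=
        hZ.integral_comp (f := fun x ↦ stdNormalCDF (t + a * x))
          (Measurable.aestronglyMeasurable (by fun_prop))
    _ = ∫ y, stdNormalCDF (t - y) ∂((gaussianReal μ v).map (-a * ·)) := by
      rw [integral_map (by fun_prop) (Measurable.aestronglyMeasurable (by fun_prop))]
      simp_rw [neg_mul, sub_neg_eq_add]
    _ = cdf (gaussianReal 0 1 ∗ (gaussianReal μ v).map (-a * ·)) t := by
      rw [gaussianReal_map_const_mul, stdNormalCDF_eq_cdf_gaussianReal, cdf_conv]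
    _ = _ := by
      rw [gaussianReal_map_const_mul, gaussianReal_conv_gaussianReal,
        cdf_gaussianReal _ (by positivity), ← stdNormalCDF_eq_cdf_gaussianReal]
      congr 2
      · ring
      · rw [NNReal.coe_add, NNReal.coe_mul, NNReal.coe_mk, NNReal.coe_one, neg_sq]

/-- If `Z ~ N(μ, σ²)` (variance `v = σ² ≥ 0`), then
`E[Φ(t + a Z)] = Φ((t + a μ)/√(1 + a² σ²))`. -/
theorem probit_gaussian_expectation {Ω : Type*} [MeasurableSpace Ω]
    (P : Measure Ω) [IsProbabilityMeasure P]
    (Z : Ω → ℝ) (hZ : Measurable Z) (μ : ℝ) (v : ℝ≥0)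
    (hdist : P.map Z = gaussianReal μ v) (t a : ℝ) :
    ∫ ω, stdNormalCDF (t + a * Z ω) ∂P =
      stdNormalCDF ((t + a * μ) / Real.sqrt (1 + a ^ 2 * (v : ℝ))) :=
  probit_gaussian_expectation_general P Z μ v hdist t a
end
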